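/- arXiv:1206.5061 — 3 statements merged into one kernel-verified Lean document; each statement's English description precedes it below -/
import Mathlib

section
/- The deformed bracket {·,·}_g on ℝ^6 satisfies the Jacobi identity: for all smooth functions f, h, k : ℝ^6 → ℝ, {f,{h,k}_g}_g + {h,{k,f}_g}_g + {k,{f,h}_g}_g = 0 identically on ℝ^6; in particular it is a Poisson bracket. -/
open scoped BigOperators

noncomputable section

abbrev Pt3 : Type := (Fin 3 → ℝ) × (Fin 3 → ℝ)

/-- Euclidean scalar product on ℝ³ -/
def dot (a b : Fin 3 → ℝ) : ℝ := ∑ i, a i * b i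

/-- totally antisymmetric Levi-Civita symbol on `Fin 3` -/
def eps (i j k : Fin 3) : ℝ :=
  ((((i : ℕ) : ℝ) - ((j : ℕ) : ℝ)) * (((j : ℕ) : ℝ) - ((k : ℕ) : ℝ))
    * (((k : ℕ) : ℝ) - ((i : ℕ) : ℝ))) / 2

/-- vector cross product on ℝ³ -/
def cross (a b : Fin 3 → ℝ) : Fin 3 → ℝ := fun i => ∑ j, ∑ k, eps i j k * a j * b k

/-- partial derivative in the coordinate `x i` -/
def dx (f : Pt3 → ℝ) (i : Fin 3) (z : Pt3) : ℝ := fderiv ℝ f z (Pi.single i 1, 0)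

/-- partial derivative in the coordinate `M i` (second group of coordinates) -/
def dM (f : Pt3 → ℝ) (i : Fin 3) (z : Pt3) : ℝ := fderiv ℝ f z (0, Pi.single i 1)

/-- partial derivative of a function of `x` only -/
def dxg (g : (Fin 3 → ℝ) → ℝ) (i : Fin 3) (x : Fin 3 → ℝ) : ℝ := fderiv ℝ g x (Pi.single i 1)

/-- bracket associated with a skew-symmetric structure matrix π with
`π_{x_i x_j} = 0`, `π_{M_i x_j} = Axm i j`, `π_{M_i M_j} = Bmm i j`. -/
def piBracket (Axm Bmm : Fin 3 → Fin 3 → Pt3 → ℝ) (f h : Pt3 → ℝ) (z : Pt3) : ℝ :=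
  ∑ i, ∑ j,
    (dM f i z * Axm i j z * dx h j z - dx f j z * Axm i j z * dM h i z
      + dM f i z * Bmm i j z * dM h j z)

/-- `π_{M_i x_j} = ε_{ijk} g(x) x_k` (summation over `k`) -/
def AxmG (g : (Fin 3 → ℝ) → ℝ) (i j : Fin 3) (z : Pt3) : ℝ :=
  ∑ k, eps i j k * g z.1 * z.1 k

/-- `π_{M_i M_j} = ε_{ijk} ( g(x) M_k + x_k ∑_m M_m ∂g/∂x_m )` (summation over `k`) -/
def BmmG (g : (Fin 3 → ℝ) → ℝ) (i j : Fin 3) (z : Pt3) : ℝ :=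
  ∑ k, eps i j k * (g z.1 * z.2 k + z.1 k * ∑ m, z.2 m * dxg g m z.1)

/-- the deformed bracket {·,·}_g on ℝ⁶ -/
def e3Bracket (g : (Fin 3 → ℝ) → ℝ) (f h : Pt3 → ℝ) (z : Pt3) : ℝ :=
  piBracket (AxmG g) (BmmG g) f h z

abbrev Idx : Type := Fin 3 ⊕ Fin 3

def ee : Idx → Pt3
  | Sum.inl i => (Pi.single i 1, 0)
  | Sum.inr i => (0, Pi.single i 1)

def Dz (a : Idx) (f : Pt3 → ℝ) (z : Pt3) : ℝ := fderiv ℝ f z (ee a)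

def ddg (g : (Fin 3 → ℝ) → ℝ) (m l : Fin 3) (x : Fin 3 → ℝ) : ℝ :=
  fderiv ℝ (dxg g m) x (Pi.single l 1)

lemma contDiff_dxg {g : (Fin 3 → ℝ) → ℝ} (hg : ContDiff ℝ (⊤ : ℕ∞) g) (m : Fin 3) :
    ContDiff ℝ (⊤ : ℕ∞) (dxg g m) :=
  (hg.fderiv_right (by simp)).clm_apply contDiff_const

lemma contDiff_Dz {f : Pt3 → ℝ} (hf : ContDiff ℝ (⊤ : ℕ∞) f) (a : Idx) :
    ContDiff ℝ (⊤ : ℕ∞) (Dz a f) :=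
  (hf.fderiv_right (by simp)).clm_apply contDiff_const

lemma Dz_mul (a : Idx) {u v : Pt3 → ℝ} {z : Pt3}
    (hu : DifferentiableAt ℝ u z) (hv : DifferentiableAt ℝ v z) :
    Dz a (fun w => u w * v w) z = Dz a u z * v z + u z * Dz a v z := by
  unfold Dz
  rw [fderiv_fun_mul hu hv]
  simp
  ring

lemma Dz_sum (a : Idx) {ι : Type*} {s : Finset ι} {A : ι → Pt3 → ℝ} {z : Pt3}
    (h : ∀ i ∈ s, DifferentiableAt ℝ (A i) z) :
    Dz a (fun w => ∑ i ∈ s, A i w) z = ∑ i ∈ s, Dz a (A i) z := by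
  unfold Dz
  rw [fderiv_fun_sum h]
  simp

lemma Dz_comm {f : Pt3 → ℝ} (hf : ContDiff ℝ (⊤ : ℕ∞) f) (a b : Idx) (z : Pt3) :
    Dz a (Dz b f) z = Dz b (Dz a f) z := by
  have hfd : DifferentiableAt ℝ (fderiv ℝ f) z :=
    ((hf.fderiv_right (m := (⊤ : ℕ∞)) (by simp)).differentiable (by simp)).differentiableAt
  have key : ∀ c d : Idx, Dz c (Dz d f) z = fderiv ℝ (fderiv ℝ f) z (ee c) (ee d) := by
    intro c d
    unfold Dz
    rw [fderiv_clm_apply hfd (differentiableAt_const _)]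
    simp
  rw [key a b, key b a]
  exact (hf.contDiffAt.isSymmSndFDerivAt (by rw [minSmoothness_of_isRCLikeNormedField]; exact WithTop.coe_le_coe.mpr (le_top : (2 : ℕ∞) ≤ ⊤))) (ee a) (ee b)

lemma ddg_comm {g : (Fin 3 → ℝ) → ℝ} (hg : ContDiff ℝ (⊤ : ℕ∞) g) (m l : Fin 3) (x : Fin 3 → ℝ) :
    ddg g m l x = ddg g l m x := by
  have hfd : DifferentiableAt ℝ (fderiv ℝ g) x :=
    ((hg.fderiv_right (m := (⊤ : ℕ∞)) (by simp)).differentiable (by simp)).differentiableAt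
  have key : ∀ c d : Fin 3, ddg g c d x = fderiv ℝ (fderiv ℝ g) x (Pi.single d 1) (Pi.single c 1) := by
    intro c d
    unfold ddg dxg
    rw [show (fun y => fderiv ℝ g y (Pi.single c 1)) = fun y => (fderiv ℝ g y) (Pi.single c 1) from rfl,
      fderiv_clm_apply hfd (differentiableAt_const _)]
    simp
  rw [key m l, key l m]
  exact (hg.contDiffAt.isSymmSndFDerivAt (by rw [minSmoothness_of_isRCLikeNormedField]; exact WithTop.coe_le_coe.mpr (le_top : (2 : ℕ∞) ≤ ⊤))) (Pi.single l 1) (Pi.single m 1)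

lemma Dz_const_mul (a : Idx) (c : ℝ) {u : Pt3 → ℝ} {z : Pt3} (hu : DifferentiableAt ℝ u z) :
    Dz a (fun w => c * u w) z = c * Dz a u z := by
  unfold Dz; rw [fderiv_const_mul hu]; simp

lemma contDiff_x (i : Fin 3) : ContDiff ℝ (⊤ : ℕ∞) (fun z : Pt3 => z.1 i) :=
  ((ContinuousLinearMap.proj (R := ℝ) (φ := fun _ : Fin 3 => ℝ) i).comp
    (ContinuousLinearMap.fst ℝ (Fin 3 → ℝ) (Fin 3 → ℝ))).contDiff

lemma contDiff_m (i : Fin 3) : ContDiff ℝ (⊤ : ℕ∞) (fun z : Pt3 => z.2 i) :=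
  ((ContinuousLinearMap.proj (R := ℝ) (φ := fun _ : Fin 3 => ℝ) i).comp
    (ContinuousLinearMap.snd ℝ (Fin 3 → ℝ) (Fin 3 → ℝ))).contDiff

-- derivative of a function of x only
lemma Dz_fst {φ : (Fin 3 → ℝ) → ℝ} {z : Pt3} (hφ : DifferentiableAt ℝ φ z.1) (a : Idx) :
    Dz a (fun w : Pt3 => φ w.1) z = fderiv ℝ φ z.1 (ee a).1 := by
  unfold Dz
  rw [show (fun w : Pt3 => φ w.1) = φ ∘ Prod.fst from rfl,
    fderiv_comp z hφ differentiableAt_fst]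
  simp [fderiv_fst]

lemma Dz_x_coord (a : Idx) (i : Fin 3) (z : Pt3) :
    Dz a (fun w : Pt3 => w.1 i) z = (ee a).1 i := by
  unfold Dz
  rw [show (fun w : Pt3 => w.1 i)
      = ⇑((ContinuousLinearMap.proj (R := ℝ) (φ := fun _ : Fin 3 => ℝ) i).comp
        (ContinuousLinearMap.fst ℝ (Fin 3 → ℝ) (Fin 3 → ℝ))) from rfl,
    ContinuousLinearMap.fderiv]
  rfl

lemma Dz_m_coord (a : Idx) (i : Fin 3) (z : Pt3) :
    Dz a (fun w : Pt3 => w.2 i) z = (ee a).2 i := by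
  unfold Dz
  rw [show (fun w : Pt3 => w.2 i)
      = ⇑((ContinuousLinearMap.proj (R := ℝ) (φ := fun _ : Fin 3 => ℝ) i).comp
        (ContinuousLinearMap.snd ℝ (Fin 3 → ℝ) (Fin 3 → ℝ))) from rfl,
    ContinuousLinearMap.fderiv]
  rfl

lemma ee_inl_fst (l : Fin 3) : (ee (Sum.inl l)).1 = Pi.single l 1 := rfl
lemma ee_inl_snd (l : Fin 3) : (ee (Sum.inl l)).2 = 0 := rfl
lemma ee_inr_fst (l : Fin 3) : (ee (Sum.inr l)).1 = 0 := rfl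
lemma ee_inr_snd (l : Fin 3) : (ee (Sum.inr l)).2 = Pi.single l 1 := rfl


section G
variable {g : (Fin 3 → ℝ) → ℝ} (hg : ContDiff ℝ (⊤ : ℕ∞) g)
include hg

lemma contDiff_cg : ContDiff ℝ (⊤ : ℕ∞) (fun z : Pt3 => g z.1) := hg.comp contDiff_fst
lemma contDiff_cdg (m : Fin 3) : ContDiff ℝ (⊤ : ℕ∞) (fun z : Pt3 => dxg g m z.1) :=
  (contDiff_dxg hg m).comp contDiff_fst
lemma contDiff_sg : ContDiff ℝ (⊤ : ℕ∞) (fun z : Pt3 => ∑ m, z.2 m * dxg g m z.1) :=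
  ContDiff.sum (fun m _ => (contDiff_m m).mul (contDiff_cdg hg m))
lemma contDiff_Axm (i j : Fin 3) : ContDiff ℝ (⊤ : ℕ∞) (AxmG g i j) :=
  ContDiff.sum (fun k _ => (contDiff_const.mul (contDiff_cg hg)).mul (contDiff_x k))
lemma contDiff_Bmm (i j : Fin 3) : ContDiff ℝ (⊤ : ℕ∞) (BmmG g i j) :=
  ContDiff.sum (fun k _ => contDiff_const.mul
    (((contDiff_cg hg).mul (contDiff_m k)).add ((contDiff_x k).mul (contDiff_sg hg))))

lemma Dz_cg (a : Idx) (z : Pt3) :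
    Dz a (fun w : Pt3 => g w.1) z = fderiv ℝ g z.1 (ee a).1 :=
  Dz_fst (hg.differentiable (by simp)).differentiableAt a

end G

lemma Dz_add (a : Idx) {u v : Pt3 → ℝ} {z : Pt3}
    (hu : DifferentiableAt ℝ u z) (hv : DifferentiableAt ℝ v z) :
    Dz a (fun w => u w + v w) z = Dz a u z + Dz a v z := by
  unfold Dz; rw [fderiv_fun_add hu hv]; simp

lemma Dz_neg (a : Idx) (u : Pt3 → ℝ) (z : Pt3) :
    Dz a (fun w => -(u w)) z = -(Dz a u z) := by
  unfold Dz; rw [fderiv_fun_neg]; simp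

lemma eps_swap (i j k : Fin 3) : eps i j k = -eps j i k := by unfold eps; ring

def PM (g : (Fin 3 → ℝ) → ℝ) : Idx → Idx → Pt3 → ℝ
  | Sum.inl _, Sum.inl _ => fun _ => 0
  | Sum.inr i, Sum.inl j => AxmG g i j
  | Sum.inl i, Sum.inr j => fun z => -(AxmG g j i z)
  | Sum.inr i, Sum.inr j => BmmG g i j

lemma PM_skew (g : (Fin 3 → ℝ) → ℝ) (a b : Idx) :
    PM g a b = fun z => -(PM g b a z) := by
  rcases a with i | i <;> rcases b with j | j <;> funext z <;> simp [PM]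
  · unfold BmmG
    rw [← Finset.sum_neg_distrib]
    exact Finset.sum_congr rfl fun k _ => by rw [eps_swap i j k]; ring

section G
variable {g : (Fin 3 → ℝ) → ℝ} (hg : ContDiff ℝ (⊤ : ℕ∞) g)
include hg

lemma contDiff_PM (a b : Idx) : ContDiff ℝ (⊤ : ℕ∞) (PM g a b) := by
  rcases a with i | i <;> rcases b with j | j
  · exact contDiff_const
  · exact (contDiff_Axm hg j i).neg
  · exact contDiff_Axm hg i j
  · exact contDiff_Bmm hg i j

lemma diffAt_cg {z : Pt3} : DifferentiableAt ℝ (fun w : Pt3 => g w.1) z :=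
  ((contDiff_cg hg).differentiable (by simp)).differentiableAt

lemma Dz_Axm (a : Idx) (i j : Fin 3) (z : Pt3) :
    Dz a (AxmG g i j) z
      = ∑ k, eps i j k * (fderiv ℝ g z.1 (ee a).1 * z.1 k + g z.1 * (ee a).1 k) := by
  unfold AxmG
  rw [Dz_sum a (fun k _ =>
    ((((contDiff_const.mul (contDiff_cg hg)).mul (contDiff_x k)).differentiable
      (by simp)).differentiableAt))]
  refine Finset.sum_congr rfl fun k _ => ?_
  rw [Dz_mul a (((contDiff_const.mul (contDiff_cg hg)).differentiable (by simp)).differentiableAt)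
      (((contDiff_x k).differentiable (by simp)).differentiableAt),
    Dz_const_mul a _ (diffAt_cg hg), Dz_cg hg, Dz_x_coord]
  ring

lemma Dz_Bmm (a : Idx) (i j : Fin 3) (z : Pt3) :
    Dz a (BmmG g i j) z
      = ∑ k, eps i j k *
          (fderiv ℝ g z.1 (ee a).1 * z.2 k + g z.1 * (ee a).2 k
            + (ee a).1 k * (∑ m, z.2 m * dxg g m z.1)
            + z.1 k * (∑ m, ((ee a).2 m * dxg g m z.1
                + z.2 m * fderiv ℝ (dxg g m) z.1 (ee a).1))) := by
  have dS : DifferentiableAt ℝ (fun w : Pt3 => ∑ m, w.2 m * dxg g m w.1) z :=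
    ((contDiff_sg hg).differentiable (by simp)).differentiableAt
  have dgk : ∀ k : Fin 3, DifferentiableAt ℝ (fun w : Pt3 => g w.1 * w.2 k) z := fun k =>
    (((contDiff_cg hg).mul (contDiff_m k)).differentiable (by simp)).differentiableAt
  have dxs : ∀ k : Fin 3, DifferentiableAt ℝ (fun w : Pt3 => w.1 k * ∑ m, w.2 m * dxg g m w.1) z :=
    fun k => ((((contDiff_x k).mul (contDiff_sg hg)).differentiable (by simp)).differentiableAt)
  unfold BmmG
  rw [Dz_sum a (A := fun k w => eps i j k * (g w.1 * w.2 k + w.1 k * ∑ m, w.2 m * dxg g m w.1))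
    (fun k _ => (contDiff_const.differentiable (by simp : (⊤ : WithTop ℕ∞) ≠ 0)).differentiableAt.mul
    ((dgk k).add (dxs k)))]
  refine Finset.sum_congr rfl fun k _ => ?_
  rw [Dz_const_mul a _ (u := fun w => g w.1 * w.2 k + w.1 k * ∑ m, w.2 m * dxg g m w.1)
      (((dgk k).add (dxs k))),
    Dz_add a (dgk k) (dxs k),
    Dz_mul a (diffAt_cg hg) (((contDiff_m k).differentiable (by simp)).differentiableAt),
    Dz_mul a (((contDiff_x k).differentiable (by simp)).differentiableAt) dS,
    Dz_cg hg, Dz_m_coord, Dz_x_coord,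
    Dz_sum a (fun m _ => (((contDiff_m m).mul (contDiff_cdg hg m)).differentiable
      (by simp)).differentiableAt)]
  have : ∀ m : Fin 3, Dz a (fun w : Pt3 => w.2 m * dxg g m w.1) z
      = (ee a).2 m * dxg g m z.1 + z.2 m * fderiv ℝ (dxg g m) z.1 (ee a).1 := by
    intro m
    rw [Dz_mul a (((contDiff_m m).differentiable (by simp)).differentiableAt)
        (((contDiff_cdg hg m).differentiable (by simp)).differentiableAt),
      Dz_m_coord, Dz_fst ((contDiff_dxg hg m).differentiable (by simp)).differentiableAt]
  simp only [this]
  ring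

end G

lemma Dz_zero (a : Idx) (z : Pt3) : Dz a (fun _ => (0:ℝ)) z = 0 := by
  unfold Dz; simp

section G
variable {g : (Fin 3 → ℝ) → ℝ} (hg : ContDiff ℝ (⊤ : ℕ∞) g)
include hg

lemma dxg_def' (i : Fin 3) (x : Fin 3 → ℝ) : fderiv ℝ g x (Pi.single i 1) = dxg g i x := rfl
omit hg
lemma ddg_def' (g : (Fin 3 → ℝ) → ℝ) (m l : Fin 3) (x : Fin 3 → ℝ) :
    fderiv ℝ (dxg g m) x (Pi.single l 1) = ddg g m l x := rfl
include hg

omit hg in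
lemma jac_LLL (g : (Fin 3 → ℝ) → ℝ) (i j k : Fin 3) (z : Pt3) :
    ∑ a : Idx, (PM g a (Sum.inl i) z * Dz a (PM g (Sum.inl j) (Sum.inl k)) z
      + PM g a (Sum.inl j) z * Dz a (PM g (Sum.inl k) (Sum.inl i)) z
      + PM g a (Sum.inl k) z * Dz a (PM g (Sum.inl i) (Sum.inl j)) z) = 0 := by
  simp [PM, Dz_zero]

set_option maxHeartbeats 1000000 in
lemma jac_LLR (i j k : Fin 3) (z : Pt3) :
    ∑ a : Idx, (PM g a (Sum.inl i) z * Dz a (PM g (Sum.inl j) (Sum.inr k)) z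
      + PM g a (Sum.inl j) z * Dz a (PM g (Sum.inr k) (Sum.inl i)) z
      + PM g a (Sum.inr k) z * Dz a (PM g (Sum.inl i) (Sum.inl j)) z) = 0 := by
  simp only [Fintype.sum_sum_type, PM, Dz_neg, Dz_zero, Dz_Axm hg, Dz_Bmm hg,
    ee_inl_fst, ee_inl_snd, ee_inr_fst, ee_inr_snd, map_zero, dxg_def' hg, ddg_def']
  simp only [AxmG, BmmG, Fin.sum_univ_three, Pi.single_apply, Pi.zero_apply]
  fin_cases i <;> fin_cases j <;> fin_cases k <;>
    · simp [eps, ddg_comm hg 1 0, ddg_comm hg 2 0, ddg_comm hg 2 1]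
      try ring

set_option maxHeartbeats 1000000 in
lemma jac_LRR (i j k : Fin 3) (z : Pt3) :
    ∑ a : Idx, (PM g a (Sum.inl i) z * Dz a (PM g (Sum.inr j) (Sum.inr k)) z
      + PM g a (Sum.inr j) z * Dz a (PM g (Sum.inr k) (Sum.inl i)) z
      + PM g a (Sum.inr k) z * Dz a (PM g (Sum.inl i) (Sum.inr j)) z) = 0 := by
  simp only [Fintype.sum_sum_type, PM, Dz_neg, Dz_zero, Dz_Axm hg, Dz_Bmm hg,
    ee_inl_fst, ee_inl_snd, ee_inr_fst, ee_inr_snd, map_zero, dxg_def' hg, ddg_def']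
  simp only [AxmG, BmmG, Fin.sum_univ_three, Pi.single_apply, Pi.zero_apply]
  fin_cases i <;> fin_cases j <;> fin_cases k <;>
    · simp [eps, ddg_comm hg 1 0, ddg_comm hg 2 0, ddg_comm hg 2 1]
      try ring

set_option maxHeartbeats 1000000 in
lemma jac_RRR (i j k : Fin 3) (z : Pt3) :
    ∑ a : Idx, (PM g a (Sum.inr i) z * Dz a (PM g (Sum.inr j) (Sum.inr k)) z
      + PM g a (Sum.inr j) z * Dz a (PM g (Sum.inr k) (Sum.inr i)) z
      + PM g a (Sum.inr k) z * Dz a (PM g (Sum.inr i) (Sum.inr j)) z) = 0 := by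
  simp only [Fintype.sum_sum_type, PM, Dz_Axm hg, Dz_Bmm hg,
    ee_inl_fst, ee_inl_snd, ee_inr_fst, ee_inr_snd, map_zero, dxg_def' hg, ddg_def']
  simp only [AxmG, BmmG, Fin.sum_univ_three, Pi.single_apply, Pi.zero_apply]
  fin_cases i <;> fin_cases j <;> fin_cases k <;>
    · simp [eps, ddg_comm hg 1 0, ddg_comm hg 2 0, ddg_comm hg 2 1]
      try ring

lemma jacPM (b c d : Idx) (z : Pt3) :
    ∑ a : Idx, (PM g a b z * Dz a (PM g c d) z + PM g a c z * Dz a (PM g d b) z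
      + PM g a d z * Dz a (PM g b c) z) = 0 := by
  have cyc : ∀ b c d : Idx,
      (∑ a : Idx, (PM g a b z * Dz a (PM g c d) z + PM g a c z * Dz a (PM g d b) z
        + PM g a d z * Dz a (PM g b c) z))
      = ∑ a : Idx, (PM g a c z * Dz a (PM g d b) z + PM g a d z * Dz a (PM g b c) z
        + PM g a b z * Dz a (PM g c d) z) :=
    fun b c d => Finset.sum_congr rfl (fun a _ => by ring)
  rcases b with i|i <;> rcases c with j|j <;> rcases d with k|k
  · exact jac_LLL g i j k z
  · exact jac_LLR hg i j k z
  · rw [cyc, cyc]; exact jac_LLR hg k i j z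
  · exact jac_LRR hg i j k z
  · rw [cyc]; exact jac_LLR hg j k i z
  · rw [cyc]; exact jac_LRR hg j k i z
  · rw [cyc, cyc]; exact jac_LRR hg k i j z
  · exact jac_RRR hg i j k z

end G


section ALG
variable {ι : Type*} [Fintype ι]


lemma sum_nest4 (φ : ι → ι → ι → ι → ℝ) :
    (∑ x : ι × ι × ι × ι, φ x.1 x.2.1 x.2.2.1 x.2.2.2)
      = ∑ a, ∑ b, ∑ c, ∑ d, φ a b c d := by
  rw [Fintype.sum_prod_type]
  refine Finset.sum_congr rfl fun a _ => ?_
  rw [Fintype.sum_prod_type]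
  refine Finset.sum_congr rfl fun b _ => ?_
  rw [Fintype.sum_prod_type]

/-- permutation (a,b,c,d) ↦ (c,d,b,a) -/
def perm31 : (ι × ι × ι × ι) ≃ (ι × ι × ι × ι) where
  toFun x := (x.2.2.1, x.2.2.2, x.2.1, x.1)
  invFun x := (x.2.2.2, x.2.2.1, x.1, x.2.1)
  left_inv := by rintro ⟨a, b, c, d⟩; rfl
  right_inv := by rintro ⟨a, b, c, d⟩; rfl

/-- permutation (a,b,c,d) ↦ (c,b,d,a) -/
def perm2a : (ι × ι × ι × ι) ≃ (ι × ι × ι × ι) where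
  toFun x := (x.2.2.1, x.2.1, x.2.2.2, x.1)
  invFun x := (x.2.2.2, x.2.1, x.1, x.2.2.1)
  left_inv := by rintro ⟨a, b, c, d⟩; rfl
  right_inv := by rintro ⟨a, b, c, d⟩; rfl

/-- permutation (a,b,c,d) ↦ (d,b,a,c) -/
def perm2b : (ι × ι × ι × ι) ≃ (ι × ι × ι × ι) where
  toFun x := (x.2.2.2, x.2.1, x.1, x.2.2.1)
  invFun x := (x.2.2.1, x.2.1, x.2.2.2, x.1)
  left_inv := by rintro ⟨a, b, c, d⟩; rfl
  right_inv := by rintro ⟨a, b, c, d⟩; rfl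

lemma ALG (p : ι → ι → ℝ) (q : ι → ι → ι → ℝ)
    (hp : ∀ a b, p a b = -p b a)
    (hjac : ∀ b c d : ι, ∑ a, (p a b * q a c d + p a c * q a d b + p a d * q a b c) = 0)
    (F H K : ι → ℝ) (F2 H2 K2 : ι → ι → ℝ)
    (hF2 : ∀ a b, F2 a b = F2 b a) (hH2 : ∀ a b, H2 a b = H2 b a)
    (hK2 : ∀ a b, K2 a b = K2 b a) :
    (∑ a, ∑ b, F a * p a b
        * (∑ c, ∑ d, (H2 b c * p c d * K d + H c * q b c d * K d + H c * p c d * K2 b d)))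
    + (∑ a, ∑ b, H a * p a b
        * (∑ c, ∑ d, (K2 b c * p c d * F d + K c * q b c d * F d + K c * p c d * F2 b d)))
    + (∑ a, ∑ b, K a * p a b
        * (∑ c, ∑ d, (F2 b c * p c d * H d + F c * q b c d * H d + F c * p c d * H2 b d)))
      = 0 := by
  classical
  -- expand each bracket-of-bracket into three quadruple sums (product form)
  have expand : ∀ (X Y Z : ι → ℝ) (Y2 Z2 : ι → ι → ℝ),
      (∑ a, ∑ b, X a * p a b
        * (∑ c, ∑ d, (Y2 b c * p c d * Z d + Y c * q b c d * Z d + Y c * p c d * Z2 b d)))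
      = (∑ x : ι × ι × ι × ι,
          X x.1 * p x.1 x.2.1 * Y2 x.2.1 x.2.2.1 * p x.2.2.1 x.2.2.2 * Z x.2.2.2)
        + (∑ x : ι × ι × ι × ι,
          X x.1 * p x.1 x.2.1 * q x.2.1 x.2.2.1 x.2.2.2 * Y x.2.2.1 * Z x.2.2.2)
        + (∑ x : ι × ι × ι × ι,
          X x.1 * p x.1 x.2.1 * Y x.2.2.1 * p x.2.2.1 x.2.2.2 * Z2 x.2.1 x.2.2.2) := by
    intro X Y Z Y2 Z2
    simp only [Finset.mul_sum]
    rw [← sum_nest4 (fun a b c d => X a * p a b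
        * (Y2 b c * p c d * Z d + Y c * q b c d * Z d + Y c * p c d * Z2 b d)),
      ← Finset.sum_add_distrib, ← Finset.sum_add_distrib]
    exact Finset.sum_congr rfl fun x _ => by ring
  rw [expand F H K H2 K2, expand H K F K2 F2, expand K F H F2 H2]
  -- T3(X,Y,W2) = -T1(Y,W2,X), via the permutation (a,b,c,d) ↦ (c,d,b,a)
  have T31 : ∀ (X Y : ι → ℝ) (W2 : ι → ι → ℝ), (∀ a b, W2 a b = W2 b a) →
      (∑ x : ι × ι × ι × ι,
          X x.1 * p x.1 x.2.1 * Y x.2.2.1 * p x.2.2.1 x.2.2.2 * W2 x.2.1 x.2.2.2)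
      = -(∑ x : ι × ι × ι × ι,
          Y x.1 * p x.1 x.2.1 * W2 x.2.1 x.2.2.1 * p x.2.2.1 x.2.2.2 * X x.2.2.2) := by
    intro X Y W2 hW2
    rw [← Finset.sum_neg_distrib]
    refine Fintype.sum_equiv perm31 _ _ ?_
    rintro ⟨a, b, c, d⟩
    simp only [perm31, Equiv.coe_fn_mk]
    rw [hW2 d b, hp b a]
    ring
  rw [T31 F H K2 hK2, T31 H K F2 hF2, T31 K F H2 hH2]
  -- T1 terms cancel against T3 terms; only the q-terms remain
  have T2b : (∑ x : ι × ι × ι × ι,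
        H x.1 * p x.1 x.2.1 * q x.2.1 x.2.2.1 x.2.2.2 * K x.2.2.1 * F x.2.2.2)
      = ∑ x : ι × ι × ι × ι,
        H x.2.2.1 * p x.2.2.1 x.2.1 * q x.2.1 x.2.2.2 x.1 * K x.2.2.2 * F x.1 := by
    refine Fintype.sum_equiv perm2b _ _ ?_
    rintro ⟨a, b, c, d⟩
    simp only [perm2b, Equiv.coe_fn_mk]
  have T2c : (∑ x : ι × ι × ι × ι,
        K x.1 * p x.1 x.2.1 * q x.2.1 x.2.2.1 x.2.2.2 * F x.2.2.1 * H x.2.2.2)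
      = ∑ x : ι × ι × ι × ι,
        K x.2.2.2 * p x.2.2.2 x.2.1 * q x.2.1 x.1 x.2.2.1 * F x.1 * H x.2.2.1 := by
    refine Fintype.sum_equiv perm2a _ _ ?_
    rintro ⟨a, b, c, d⟩
    simp only [perm2a, Equiv.coe_fn_mk]
  rw [T2b, T2c]
  have final : (∑ x : ι × ι × ι × ι,
        F x.1 * p x.1 x.2.1 * q x.2.1 x.2.2.1 x.2.2.2 * H x.2.2.1 * K x.2.2.2)
      + (∑ x : ι × ι × ι × ι,
        H x.2.2.1 * p x.2.2.1 x.2.1 * q x.2.1 x.2.2.2 x.1 * K x.2.2.2 * F x.1)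
      + (∑ x : ι × ι × ι × ι,
        K x.2.2.2 * p x.2.2.2 x.2.1 * q x.2.1 x.1 x.2.2.1 * F x.1 * H x.2.2.1) = 0 := by
    rw [← Finset.sum_add_distrib, ← Finset.sum_add_distrib, sum_nest4 (fun a b c d =>
      F a * p a b * q b c d * H c * K d + H c * p c b * q b d a * K d * F a
        + K d * p d b * q b a c * F a * H c)]
    refine Finset.sum_eq_zero fun a _ => ?_
    rw [Finset.sum_comm]
    refine Finset.sum_eq_zero fun c _ => ?_
    rw [Finset.sum_comm]
    refine Finset.sum_eq_zero fun d _ => ?_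
    have : (∑ b, (F a * p a b * q b c d * H c * K d + H c * p c b * q b d a * K d * F a
        + K d * p d b * q b a c * F a * H c))
        = -(F a * H c * K d) * ∑ b, (p b a * q b c d + p b c * q b d a + p b d * q b a c) := by
      rw [Finset.mul_sum]
      refine Finset.sum_congr rfl fun b _ => ?_
      rw [hp a b, hp c b, hp d b]
      ring
    rw [this, hjac a c d, mul_zero]
  linarith [final]
end ALG

section Assemble
variable {g : (Fin 3 → ℝ) → ℝ} (hg : ContDiff ℝ (⊤ : ℕ∞) g)

omit hg in
lemma e3Bracket_eq (f h : Pt3 → ℝ) (z : Pt3) :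
    e3Bracket g f h z = ∑ a : Idx, ∑ b : Idx, Dz a f z * PM g a b z * Dz b h z := by
  have edx : ∀ (u : Pt3 → ℝ) (i : Fin 3), dx u i z = Dz (Sum.inl i) u z := fun _ _ => rfl
  have edM : ∀ (u : Pt3 → ℝ) (i : Fin 3), dM u i z = Dz (Sum.inr i) u z := fun _ _ => rfl
  simp only [e3Bracket, piBracket, PM, Fintype.sum_sum_type, edx, edM, Fin.sum_univ_three]
  ring

include hg
lemma Dz_e3Bracket {h k : Pt3 → ℝ} (hh : ContDiff ℝ (⊤ : ℕ∞) h) (hk : ContDiff ℝ (⊤ : ℕ∞) k)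
    (b : Idx) (z : Pt3) :
    Dz b (e3Bracket g h k) z
      = ∑ c : Idx, ∑ d : Idx, (Dz b (Dz c h) z * PM g c d z * Dz d k z
          + Dz c h z * Dz b (PM g c d) z * Dz d k z
          + Dz c h z * PM g c d z * Dz b (Dz d k) z) := by
  have hrw : e3Bracket g h k
      = fun w => ∑ c : Idx, ∑ d : Idx, Dz c h w * PM g c d w * Dz d k w :=
    funext fun w => e3Bracket_eq h k w
  have hdiff : ∀ c d : Idx,
      DifferentiableAt ℝ (fun w => Dz c h w * PM g c d w * Dz d k w) z := fun c d =>
    ((((contDiff_Dz hh c).mul (contDiff_PM hg c d)).mul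
      (contDiff_Dz hk d)).differentiable (by simp)).differentiableAt
  have hdiff2 : ∀ c : Idx,
      DifferentiableAt ℝ (fun w => ∑ d : Idx, Dz c h w * PM g c d w * Dz d k w) z := fun c =>
    ((ContDiff.sum (fun d _ => ((contDiff_Dz hh c).mul (contDiff_PM hg c d)).mul
      (contDiff_Dz hk d))).differentiable (by simp)).differentiableAt
  rw [hrw, Dz_sum b (fun c _ => hdiff2 c)]
  refine Finset.sum_congr rfl fun c _ => ?_
  rw [Dz_sum b (fun d _ => hdiff c d)]
  refine Finset.sum_congr rfl fun d _ => ?_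
  rw [Dz_mul b ((((contDiff_Dz hh c).mul (contDiff_PM hg c d)).differentiable
      (by simp)).differentiableAt) (((contDiff_Dz hk d).differentiable (by simp)).differentiableAt),
    Dz_mul b (((contDiff_Dz hh c).differentiable (by simp)).differentiableAt)
      (((contDiff_PM hg c d).differentiable (by simp)).differentiableAt)]
  ring

end Assemble

/-- the deformed bracket {·,·}_g on ℝ⁶ satisfies the Jacobi identity. -/
theorem jacobi_e3Bracket (g : (Fin 3 → ℝ) → ℝ)
    (hg : ContDiff ℝ (⊤ : ℕ∞) g) (hg0 : ∀ x, g x ≠ 0)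
    (f h k : Pt3 → ℝ)
    (hf : ContDiff ℝ (⊤ : ℕ∞) f) (hh : ContDiff ℝ (⊤ : ℕ∞) h) (hk : ContDiff ℝ (⊤ : ℕ∞) k) :
    ∀ z : Pt3,
      e3Bracket g f (e3Bracket g h k) z + e3Bracket g h (e3Bracket g k f) z
        + e3Bracket g k (e3Bracket g f h) z = 0 := by
  intro z
  have hp : ∀ a b : Idx, PM g a b z = -(PM g b a z) := fun a b => congrFun (PM_skew g a b) z
  have key := ALG (fun a b => PM g a b z) (fun a c d => Dz a (PM g c d) z)
    hp (fun b c d => jacPM hg b c d z)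
    (fun a => Dz a f z) (fun a => Dz a h z) (fun a => Dz a k z)
    (fun a b => Dz a (Dz b f) z) (fun a b => Dz a (Dz b h) z) (fun a b => Dz a (Dz b k) z)
    (fun a b => Dz_comm hf a b z) (fun a b => Dz_comm hh a b z) (fun a b => Dz_comm hk a b z)
  rw [e3Bracket_eq f _ z, e3Bracket_eq h _ z, e3Bracket_eq k _ z]
  simp only [Dz_e3Bracket hg hh hk, Dz_e3Bracket hg hk hf, Dz_e3Bracket hg hf hh]
  exact key
end
end

section
/- The Veselova vector field has the invariant measure ĝ dx dM with density ĝ(x) = (x,Âx)^{1/2}: on the open set {(x,M) ∈ ℝ^6 : (x,Âx) > 0}, Σ_{i=1}^3 [ ∂/∂x_i ( ĝ(x) (x × ω)_i ) + ∂/∂M_i ( ĝ(x) (M × ω + λx)_i ) ] = 0 identically. -/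
/-!
Write `S = (Âx, x)`, so `ĝ = √S`, and compute every partial derivative as a derivative along a
coordinate line. The component `(x × ω)ᵢ` does not depend on `xᵢ`, and `(M × ÂM)ᵢ` does not
depend on `Mᵢ`, so only `ĝ` is differentiated in the `x`-terms and only `λ` in the `M`-terms:
the divergence is `(Âx, x × ω)/ĝ + ĝ · ∂λ/∂M[x]`. Along the line `M + t x` the numerator of `λ`
is affine in `t`, so `∂λ/∂M[x] = (ÂM × x, Âx)/S = -(x × ω, Âx)/ĝ²`, and the two terms cancel.
-/

open scoped BigOperators

noncomputable section

/-- angular velocity `ω = Â M` with `Â = diag â` -/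
def omV (ah : Fin 3 → ℝ) (z : Pt3) : Fin 3 → ℝ := fun i => ah i * z.2 i

/-- Lagrange multiplier `λ = (Â M × M, Â x)/(Â x, x)` -/
def lamV (ah : Fin 3 → ℝ) (z : Pt3) : ℝ :=
  dot (cross (omV ah z) z.2) (fun i => ah i * z.1 i)
    / dot (fun i => ah i * z.1 i) z.1

/-- the Veselova vector field `Z(x,M) = (x × ω, M × ω + λ x)` -/
def Zves (ah : Fin 3 → ℝ) (z : Pt3) : Pt3 :=
  (cross z.1 (omV ah z), fun i => cross z.2 (omV ah z) i + lamV ah z * z.1 i)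

/-- `ĝ(x) = (x, Â x)^{1/2}` -/
def ghat (ah : Fin 3 → ℝ) (x : Fin 3 → ℝ) : ℝ :=
  Real.sqrt (dot x (fun i => ah i * x i))

open Matrix

section CrossProduct

variable {R : Type*} [CommRing R]

lemma add_smul_single_crossProduct_apply (x w : Fin 3 → R) (i : Fin 3) (t : R) :
    ((x + t • Pi.single i 1) ⨯₃ w) i = (x ⨯₃ w) i := by
  have h : (Pi.single i 1 ⨯₃ w) i = 0 := by
    rw [← single_one_dotProduct i (Pi.single i 1 ⨯₃ w), dot_self_cross]
  simp [h]

lemma crossProduct_mul_add_smul_single_apply (a M : Fin 3 → R) (i : Fin 3) (t : R) :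
    ((M + t • Pi.single i 1) ⨯₃ (a * (M + t • Pi.single i 1))) i = (M ⨯₃ (a * M)) i := by
  fin_cases i <;> simp [cross_apply]

end CrossProduct

theorem fderiv_apply_eq_of_hasLineDerivAt {𝕜 E F : Type*} [NontriviallyNormedField 𝕜]
    [NormedAddCommGroup E] [NormedSpace 𝕜 E] [NormedAddCommGroup F] [NormedSpace 𝕜 F]
    {f : E → F} {x v : E} {f' : F} (hf : DifferentiableAt 𝕜 f x)
    (h : HasLineDerivAt 𝕜 f f' x v) : fderiv 𝕜 f x v = f' :=
  hf.hasFDerivAt.hasLineDerivAt v |>.unique h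

lemma cross_eq_crossProduct (a b : Fin 3 → ℝ) : cross a b = a ⨯₃ b := by
  ext i
  fin_cases i <;> simp [cross, eps, Fin.sum_univ_three, cross_apply] <;> ring

lemma sum_mul_dM_eq_fderiv (f : Pt3 → ℝ) (z : Pt3) (v : Fin 3 → ℝ) :
    ∑ i, v i * dM f i z = fderiv ℝ f z (0, v) := by
  have hv : ((0 : Fin 3 → ℝ), v) = ∑ i, v i • ((0 : Fin 3 → ℝ), Pi.single i (1 : ℝ)) := by
    ext j
    · simp [Prod.fst_sum]
    · simp [Prod.snd_sum, Finset.sum_apply, Pi.single_apply]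
  rw [hv, map_sum]
  simp only [dM, map_smul, smul_eq_mul]

section Veselova

variable (ah : Fin 3 → ℝ)

lemma omV_eq_mul (z : Pt3) : omV ah z = ah * z.2 := rfl

lemma lamV_eq (z : Pt3) :
    lamV ah z = (ah * z.2) ⨯₃ z.2 ⬝ᵥ (ah * z.1) / (ah * z.1) ⬝ᵥ z.1 := by
  rw [lamV, cross_eq_crossProduct]
  rfl

lemma differentiableAt_ghat {x : Fin 3 → ℝ} (hx : dot x (fun i => ah i * x i) ≠ 0) :
    DifferentiableAt ℝ (ghat ah) x := by
  unfold ghat dot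
  fun_prop (disch := exact hx)

lemma differentiableAt_lamV {z : Pt3} (hz : dot z.1 (fun i => ah i * z.1 i) ≠ 0) :
    DifferentiableAt ℝ (lamV ah) z := by
  unfold lamV dot cross omV
  fun_prop (disch := simpa [dot, mul_comm] using hz)

lemma hasLineDerivAt_ghat {x : Fin 3 → ℝ} (hx : 0 < dot x (fun i => ah i * x i))
    (v : Fin 3 → ℝ) : HasLineDerivAt ℝ (ghat ah) ((ah * x) ⬝ᵥ v / ghat ah x) x v := by
  have hline (j : Fin 3) : HasDerivAt (fun t : ℝ => x j + t * v j) (v j) 0 := by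
    simpa using ((hasDerivAt_id (0 : ℝ)).mul_const (v j)).const_add (x j)
  have hS : HasDerivAt (fun t : ℝ => ∑ j, (x j + t * v j) * (ah j * (x j + t * v j)))
      (2 * ((ah * x) ⬝ᵥ v)) 0 :=
    (HasDerivAt.fun_sum fun j _ => (hline j).mul ((hline j).const_mul (ah j))).congr_deriv <| by
      simp only [dotProduct, Finset.mul_sum, Pi.mul_apply, zero_mul, add_zero]
      exact Finset.sum_congr rfl fun j _ => by ring
  have hghat_line : (fun t : ℝ => ghat ah (x + t • v))
      = fun t => √(∑ j, (x j + t * v j) * (ah j * (x j + t * v j))) := by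
    funext t
    simp [ghat, dot]
  unfold HasLineDerivAt
  rw [hghat_line]
  refine (hS.sqrt ?_).congr_deriv ?_ <;> simp only [zero_mul, add_zero]
  · exact hx.ne'
  · rw [mul_div_mul_left _ _ two_ne_zero]
    rfl

lemma lamV_add_smul_inr_self (z : Pt3) (t : ℝ) :
    lamV ah (z + t • (0, z.1)) =
      lamV ah z + t * (((ah * z.2) ⨯₃ z.1) ⬝ᵥ (ah * z.1) / (ah * z.1) ⬝ᵥ z.1) := by
  -- the other first-order term and the second-order term are triple products containing `Âx` twice
  have hN : (ah * (z.2 + t • z.1)) ⨯₃ (z.2 + t • z.1) ⬝ᵥ (ah * z.1)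
      = (ah * z.2) ⨯₃ z.2 ⬝ᵥ (ah * z.1) + t * ((ah * z.2) ⨯₃ z.1 ⬝ᵥ (ah * z.1)) := by
    simp only [dotProduct, cross_apply, Fin.isValue, Pi.mul_apply, Pi.add_apply, Pi.smul_apply,
      smul_eq_mul, Fin.sum_univ_three, cons_val_zero, cons_val_one, cons_val]
    ring
  simp only [lamV_eq, Prod.fst_add, Prod.snd_add, Prod.smul_mk, smul_zero, add_zero]
  rw [hN, add_div, mul_div_assoc]

lemma fderiv_lamV_apply_inr_self {z : Pt3} (hz : dot z.1 (fun i => ah i * z.1 i) ≠ 0) :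
    fderiv ℝ (lamV ah) z (0, z.1) = ((ah * z.2) ⨯₃ z.1) ⬝ᵥ (ah * z.1) / (ah * z.1) ⬝ᵥ z.1 := by
  refine fderiv_apply_eq_of_hasLineDerivAt (differentiableAt_lamV ah hz) ?_
  unfold HasLineDerivAt
  simp only [lamV_add_smul_inr_self]
  simpa using ((hasDerivAt_id (0 : ℝ)).mul_const _).const_add (lamV ah z)

lemma dx_ghat_mul_cross {z : Pt3} (hz : 0 < dot z.1 (fun i => ah i * z.1 i)) (i : Fin 3) :
    dx (fun w => ghat ah w.1 * cross w.1 (omV ah w) i) i z =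
      ah i * z.1 i * cross z.1 (omV ah z) i / ghat ah z.1 := by
  have hg := differentiableAt_ghat ah hz.ne'
  refine fderiv_apply_eq_of_hasLineDerivAt (by unfold cross omV; fun_prop) ?_
  have h := (hasLineDerivAt_ghat ah hz (Pi.single i 1)).mul_const (cross z.1 (omV ah z) i)
  refine (h.congr_deriv ?_).congr_of_eventuallyEq (.of_forall fun t => ?_)
  · rw [dotProduct_single_one, Pi.mul_apply]
    ring
  · simp only [Prod.fst_add, Prod.snd_add, Prod.smul_mk, smul_zero, add_zero,
      cross_eq_crossProduct, omV_eq_mul, add_smul_single_crossProduct_apply]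

lemma dM_ghat_mul_cross_add_lamV_mul {z : Pt3} (hz : 0 < dot z.1 (fun i => ah i * z.1 i))
    (i : Fin 3) :
    dM (fun w => ghat ah w.1 * (cross w.2 (omV ah w) i + lamV ah w * w.1 i)) i z =
      ghat ah z.1 * (z.1 i * dM (lamV ah) i z) := by
  have hg := differentiableAt_ghat ah hz.ne'
  have hl := differentiableAt_lamV ah hz.ne'
  refine fderiv_apply_eq_of_hasLineDerivAt (by unfold cross omV; fun_prop) ?_
  have h := ((hasDerivAt_const (0 : ℝ) (cross z.2 (omV ah z) i)).add
    ((hl.hasFDerivAt.hasLineDerivAt (0, Pi.single i 1)).mul_const (z.1 i))).const_mul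
    (ghat ah z.1)
  refine (h.congr_deriv ?_).congr_of_eventuallyEq (.of_forall fun t => ?_)
  · rw [dM]
    ring
  · simp only [Prod.fst_add, Prod.snd_add, Prod.smul_mk, smul_zero, add_zero,
      cross_eq_crossProduct, omV_eq_mul, crossProduct_mul_add_smul_single_apply, Pi.add_apply,
      Pi.zero_apply]

end Veselova

/-- the Veselova vector field has the invariant measure `ĝ dx dM`. -/
theorem veselova_invariant_measure (ah : Fin 3 → ℝ) :
    ∀ z : Pt3, dot z.1 (fun i => ah i * z.1 i) > 0 →
      (∑ i, (dx (fun w => ghat ah w.1 * cross w.1 (omV ah w) i) i z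
        + dM (fun w => ghat ah w.1 *
            (cross w.2 (omV ah w) i + lamV ah w * w.1 i)) i z)) = 0 := by
  intro z hz
  have hg : ghat ah z.1 ≠ 0 := Real.sqrt_ne_zero'.mpr hz
  have hS : (ah * z.1) ⬝ᵥ z.1 = ghat ah z.1 ^ 2 := by
    rw [ghat, Real.sq_sqrt hz.le, dotProduct_comm]
    rfl
  have hflux : ∑ i, ah i * z.1 i * cross z.1 (omV ah z) i
      = (z.1 ⨯₃ (ah * z.2)) ⬝ᵥ (ah * z.1) := by
    rw [cross_eq_crossProduct, dotProduct_comm]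
    rfl
  simp only [Finset.sum_add_distrib, dx_ghat_mul_cross ah hz,
    dM_ghat_mul_cross_add_lamV_mul ah hz]
  rw [← Finset.sum_div, ← Finset.mul_sum, sum_mul_dM_eq_fderiv,
    fderiv_lamV_apply_inr_self ah hz.ne', hS, hflux, ← cross_anticomm, neg_dotProduct]
  field_simp
  ring
end
end

section
/- Suppose the Veselova parameters are related to the Chaplygin parameters by â_i = 1 − d a_i for i = 1,2,3. Then at every point (x,K) ∈ ℝ^6 with (x,x) = 1 and 1 − d(x,Ax) > 0 one has ĝ(x) := (x,Âx)^{1/2} = g(x) := (1 − d(x,Ax))^{1/2}, and the Veselova structure matrix coincides with the Chaplygin structure matrix: ε_{ijk}( ĝ K_k + x_k ( Σ_{m=1}^3 K_m ∂ĝ/∂x_m − (x,K)/ĝ ) ) = ε_{ijk}( g K_k − (d(K,Ax)/g) x_k ) for all i,j (summation over k), and ε_{ijk} ĝ x_k = ε_{ijk} g x_k. -/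
open scoped BigOperators

noncomputable section

/-- `g(x) = √(1 - d (x, A x))` with `A = diag a` -/
def gC (a : Fin 3 → ℝ) (d : ℝ) (x : Fin 3 → ℝ) : ℝ :=
  Real.sqrt (1 - d * dot x (fun i => a i * x i))

/- Since `(x, x) = 1`, the relation `âᵢ = 1 - d aᵢ` gives `(x, Âx) = 1 - d (x, Ax)`, so `ĝ = g` on the
sphere. Moreover `∂ĝ/∂x_m = â_m x_m / ĝ`, hence `Σ_m K_m ∂ĝ/∂x_m = (K, Âx)/ĝ = ((x, K) - d (K, Ax))/ĝ`,
and the `(x, K)/ĝ` terms of the Veselova matrix cancel, leaving exactly the Chaplygin entries. -/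

lemma dot_comm (u v : Fin 3 → ℝ) : dot u v = dot v u :=
  Finset.sum_congr rfl fun _ _ => mul_comm _ _

lemma dot_diag_eq_of_eq_one_sub (a ah : Fin 3 → ℝ) (d : ℝ) (hpar : ∀ i, ah i = 1 - d * a i)
    (u v : Fin 3 → ℝ) :
    dot u (fun i => ah i * v i) = dot u v - d * dot u (fun i => a i * v i) := by
  simp only [dot, hpar, Finset.mul_sum, ← Finset.sum_sub_distrib]
  exact Finset.sum_congr rfl fun i _ => by ring

lemma hasFDerivAt_dot_diag (c x : Fin 3 → ℝ) :
    HasFDerivAt (fun y => dot y (fun i => c i * y i))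
      (∑ i, (2 * c i * x i) • ContinuousLinearMap.proj (R := ℝ) (φ := fun _ : Fin 3 => ℝ) i) x := by
  refine HasFDerivAt.fun_sum fun i _ => ?_
  have hxi := hasFDerivAt_apply (𝕜 := ℝ) i x
  refine (hxi.mul (hxi.const_mul (c i))).congr_fderiv ?_
  ext v
  simp only [add_apply, smul_apply, ContinuousLinearMap.proj_apply, smul_eq_mul]
  ring

lemma dxg_ghat (ah x : Fin 3 → ℝ) (hq : 0 < dot x (fun i => ah i * x i)) (m : Fin 3) :
    dxg (ghat ah) m x = ah m * x m / ghat ah x := by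
  have hghat : HasFDerivAt (ghat ah) _ x :=
    (Real.hasDerivAt_sqrt hq.ne').comp_hasFDerivAt x (hasFDerivAt_dot_diag ah x)
  rw [dxg, hghat.fderiv]
  simp only [smul_apply, sum_apply, ContinuousLinearMap.proj_apply, Pi.single_apply, smul_eq_mul,
    mul_ite, mul_one, mul_zero, Finset.sum_ite_eq', Finset.mem_univ, ↓reduceIte, ghat]
  ring

lemma sum_mul_dxg_ghat (ah x K : Fin 3 → ℝ) (hq : 0 < dot x (fun i => ah i * x i)) :
    ∑ m, K m * dxg (ghat ah) m x = dot K (fun m => ah m * x m) / ghat ah x := by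
  simp only [dxg_ghat ah x hq, dot, Finset.sum_div]
  exact Finset.sum_congr rfl fun m _ => by ring

/-- under `â_i = 1 - d a_i`, on `(x,x) = 1` with `1 - d(x,Ax) > 0`, the
Veselova structure matrix coincides with the Chaplygin structure matrix. -/
theorem veselova_chaplygin_brackets_coincide (a ah : Fin 3 → ℝ) (d : ℝ)
    (hpar : ∀ i, ah i = 1 - d * a i) (x K : Fin 3 → ℝ)
    (hx : dot x x = 1) (hU : 1 - d * dot x (fun i => a i * x i) > 0) :
    ghat ah x = gC a d x
    ∧ (∀ i j : Fin 3,
        (∑ k, eps i j k * (ghat ah x * K k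
          + x k * ((∑ m, K m * dxg (ghat ah) m x) - dot x K / ghat ah x)))
        = ∑ k, eps i j k * (gC a d x * K k
          - d * dot K (fun m => a m * x m) / gC a d x * x k))
    ∧ (∀ i j : Fin 3,
        (∑ k, eps i j k * ghat ah x * x k) = ∑ k, eps i j k * gC a d x * x k) := by
  have hq : dot x (fun i => ah i * x i) = 1 - d * dot x (fun i => a i * x i) := by
    rw [dot_diag_eq_of_eq_one_sub a ah d hpar, hx]
  have hg : ghat ah x = gC a d x := by rw [ghat, gC, hq]
  have hq_pos : 0 < dot x (fun i => ah i * x i) := hq ▸ hU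
  have hg_pos : 0 < ghat ah x := Real.sqrt_pos.mpr hq_pos
  have hsum : ∑ m, K m * dxg (ghat ah) m x
      = (dot x K - d * dot K (fun m => a m * x m)) / ghat ah x := by
    rw [sum_mul_dxg_ghat ah x K hq_pos, dot_diag_eq_of_eq_one_sub a ah d hpar, dot_comm K x]
  refine ⟨hg, fun i j => Finset.sum_congr rfl fun k _ => ?_, fun i j => by rw [hg]⟩
  rw [hsum, ← hg]
  field_simp
  ring
end
end
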